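/- arXiv:2301.13107 — 6 statements merged into one kernel-verified Lean document; each statement's English description precedes it below -/
import Mathlib

section
/- Let k ∈ (−π, −π/2) with k ≠ −3π/4 and set ηⱼ = (2j−1)k. Then for all x ∈ ℝ and all t > 0, as L → ∞ over the positive integers: (1/L) Σ_{j=1}^{⌊Lt⌋} sin⁴(x − ηⱼ) → 3t/8, (1/L) Σ_{j=1}^{⌊Lt⌋} cos⁴(x − ηⱼ) → 3t/8, (1/L) Σ_{j=1}^{⌊Lt⌋} sin²(x − ηⱼ) cos²(x − ηⱼ) → t/8, and (1/L) Σ_{j=1}^{⌊Lt⌋} cos³(x − ηⱼ) sin(x − ηⱼ) → 0. -/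
/-!
Writing `θⱼ = x − (2j − 1)k = αj + β` with `α = −2k`, the power-reduction formulas turn each
summand into a constant plus a combination of `cos (mθⱼ)` and `sin (mθⱼ)` with `m ∈ {2, 4}`.
Since `cos (mα) ≠ 1`, these are real and imaginary parts of nontrivial geometric series, so
their partial sums stay bounded and vanish after division by `L`; only the constant survives,
contributing `c · ⌊Lt⌋ / L → c t`. On `(−π, −π/2)` the condition `cos (4α) ≠ 1` is exactly `k ≠ −3π/4`.
-/

open Filter Real Asymptotics Finset Topology

def BoundedPartialSums (f : ℕ → ℝ) : Prop :=
  (fun N => ∑ j ∈ Icc 1 N, f j) =O[atTop] fun _ => (1 : ℝ)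

namespace BoundedPartialSums

variable {f g : ℕ → ℝ}

theorem congr (hf : BoundedPartialSums f) (h : ∀ j, f j = g j) : BoundedPartialSums g := by
  rwa [← funext h]

theorem add (hf : BoundedPartialSums f) (hg : BoundedPartialSums g) :
    BoundedPartialSums fun j => f j + g j := by
  simpa only [BoundedPartialSums, sum_add_distrib] using IsBigO.add hf hg

theorem const_mul (hf : BoundedPartialSums f) (c : ℝ) :
    BoundedPartialSums fun j => c * f j := by
  simpa only [BoundedPartialSums, ← mul_sum] using IsBigO.const_mul_left hf c

end BoundedPartialSums

theorem norm_sum_Icc_exp_mul_I_le (a b : ℝ) (ha : Complex.exp (a * Complex.I) ≠ 1) (N : ℕ) :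
    ‖∑ j ∈ Icc 1 N, Complex.exp ((a * j + b : ℝ) * Complex.I)‖
      ≤ 2 / ‖Complex.exp (a * Complex.I) - 1‖ := by
  set z := Complex.exp (a * Complex.I)
  have hz : ‖z‖ = 1 := Complex.norm_exp_ofReal_mul_I a
  have hterm (j : ℕ) : Complex.exp ((a * j + b : ℝ) * Complex.I)
      = Complex.exp (b * Complex.I) * z ^ j := by
    rw [← Complex.exp_nat_mul, ← Complex.exp_add]
    congr 1
    push_cast
    ring
  rw [sum_congr rfl fun j _ => hterm j, ← mul_sum, ← Finset.Ico_add_one_right_eq_Icc,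
    geom_sum_Ico ha (Nat.le_add_left 1 N), norm_mul,
    Complex.norm_exp_ofReal_mul_I, one_mul, norm_div]
  gcongr
  calc ‖z ^ (N + 1) - z ^ 1‖ ≤ ‖z ^ (N + 1)‖ + ‖z ^ 1‖ := norm_sub_le _ _
    _ = 2 := by rw [norm_pow, norm_pow, hz]; norm_num

theorem boundedPartialSums_cos (a b : ℝ) (ha : cos a ≠ 1) :
    BoundedPartialSums fun j => cos (a * j + b) := by
  have ha' : Complex.exp (a * Complex.I) ≠ 1 := fun h => ha <| by
    rw [← Complex.exp_ofReal_mul_I_re, h, Complex.one_re]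
  refine isBigO_of_le' (c := 2 / ‖Complex.exp (a * Complex.I) - 1‖) _ fun N => ?_
  calc ‖∑ j ∈ Icc 1 N, cos (a * j + b)‖
      = |(∑ j ∈ Icc 1 N, Complex.exp ((a * j + b : ℝ) * Complex.I)).re| := by
        simp only [Complex.re_sum, Complex.exp_ofReal_mul_I_re, Real.norm_eq_abs]
    _ ≤ ‖∑ j ∈ Icc 1 N, Complex.exp ((a * j + b : ℝ) * Complex.I)‖ := Complex.abs_re_le_norm _
    _ ≤ _ := by simpa using norm_sum_Icc_exp_mul_I_le a b ha' N

theorem boundedPartialSums_sin (a b : ℝ) (ha : cos a ≠ 1) :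
    BoundedPartialSums fun j => sin (a * j + b) :=
  (boundedPartialSums_cos a (b - π / 2) ha).congr fun j => by
    rw [← add_sub_assoc, cos_sub_pi_div_two]

theorem cos_ne_one_of_lt_of_lt {a : ℝ} (n : ℤ) (h₁ : n * (2 * π) < a)
    (h₂ : a < (n + 1) * (2 * π)) : cos a ≠ 1 := by
  rintro h
  obtain ⟨m, rfl⟩ := (cos_eq_one_iff a).1 h
  have hnm : n < m := by exact_mod_cast lt_of_mul_lt_mul_right h₁ two_pi_pos.le
  have hmn : m < n + 1 := by exact_mod_cast lt_of_mul_lt_mul_right h₂ two_pi_pos.le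
  omega

theorem tendsto_avg_floor_mul {f : ℕ → ℝ} {c t : ℝ} (hf : BoundedPartialSums fun j => f j - c)
    (ht : 0 < t) :
    Tendsto (fun L : ℕ => (1 / (L : ℝ)) * ∑ j ∈ Icc 1 ⌊(L : ℝ) * t⌋₊, f j) atTop (𝓝 (c * t)) := by
  have hfloor : Tendsto (fun L : ℕ => ⌊(L : ℝ) * t⌋₊) atTop atTop :=
    tendsto_nat_floor_atTop.comp (tendsto_natCast_atTop_atTop.atTop_mul_const ht)
  have hcount : Tendsto (fun L : ℕ => (⌊(L : ℝ) * t⌋₊ : ℝ) / L) atTop (𝓝 t) := by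
    simpa [Function.comp_def, mul_comm] using
      (tendsto_nat_floor_mul_div_atTop ht.le).comp (tendsto_natCast_atTop_atTop (R := ℝ))
  have hosc : Tendsto (fun L : ℕ => (1 / (L : ℝ)) * ∑ j ∈ Icc 1 ⌊(L : ℝ) * t⌋₊, (f j - c))
      atTop (𝓝 0) := by
    refine ((isBigO_refl (fun L : ℕ => 1 / (L : ℝ)) atTop).mul (IsBigO.comp_tendsto hf hfloor))
      |>.trans_tendsto ?_
    simpa only [Function.comp_def, mul_one] using tendsto_one_div_atTop_nhds_zero_nat (𝕜 := ℝ)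
  have hsplit (L : ℕ) : (1 / (L : ℝ)) * ∑ j ∈ Icc 1 ⌊(L : ℝ) * t⌋₊, f j
      = c * ((⌊(L : ℝ) * t⌋₊ : ℝ) / L)
        + (1 / (L : ℝ)) * ∑ j ∈ Icc 1 ⌊(L : ℝ) * t⌋₊, (f j - c) := by
    rw [sum_sub_distrib, sum_const, Nat.card_Icc, Nat.add_sub_cancel, nsmul_eq_mul]
    ring
  simpa only [hsplit, add_zero] using (hcount.const_mul c).add hosc

theorem sin_pow_four (x : ℝ) : sin x ^ 4 = 3 / 8 - cos (2 * x) / 2 + cos (4 * x) / 8 := by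
  rw [show 4 * x = 2 * (2 * x) by ring, cos_two_mul (2 * x), cos_two_mul, cos_sq']
  ring

theorem cos_pow_four (x : ℝ) : cos x ^ 4 = 3 / 8 + cos (2 * x) / 2 + cos (4 * x) / 8 := by
  rw [show 4 * x = 2 * (2 * x) by ring, cos_two_mul (2 * x), cos_two_mul]
  ring

theorem sin_sq_mul_cos_sq (x : ℝ) : sin x ^ 2 * cos x ^ 2 = 1 / 8 - cos (4 * x) / 8 := by
  rw [show 4 * x = 2 * (2 * x) by ring, cos_two_mul (2 * x), cos_two_mul, sin_sq]
  ring

theorem cos_pow_three_mul_sin (x : ℝ) :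
    cos x ^ 3 * sin x = sin (2 * x) / 4 + sin (4 * x) / 8 := by
  rw [show 4 * x = 2 * (2 * x) by ring, sin_two_mul (2 * x), sin_two_mul, cos_two_mul]
  ring

section AffinePhase

variable (α β t : ℝ)

theorem boundedPartialSums_cos_mul_affine (m : ℝ) (h : cos (m * α) ≠ 1) :
    BoundedPartialSums fun j => cos (m * (α * j + β)) := by
  simpa only [mul_add, mul_assoc] using boundedPartialSums_cos (m * α) (m * β) h

theorem boundedPartialSums_sin_mul_affine (m : ℝ) (h : cos (m * α) ≠ 1) :
    BoundedPartialSums fun j => sin (m * (α * j + β)) := by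
  simpa only [mul_add, mul_assoc] using boundedPartialSums_sin (m * α) (m * β) h

theorem tendsto_avg_sin_affine_pow_four (h₂ : cos (2 * α) ≠ 1) (h₄ : cos (4 * α) ≠ 1)
    (ht : 0 < t) :
    Tendsto (fun L : ℕ => (1 / (L : ℝ)) *
        ∑ j ∈ Icc 1 ⌊(L : ℝ) * t⌋₊, sin (α * j + β) ^ 4) atTop (𝓝 (3 * t / 8)) := by
  have h := ((boundedPartialSums_cos_mul_affine α β 2 h₂).const_mul (-1 / 2)).add
    ((boundedPartialSums_cos_mul_affine α β 4 h₄).const_mul (1 / 8))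
  convert tendsto_avg_floor_mul (c := 3 / 8) (h.congr fun j => ?_) ht using 2
  · ring
  · rw [sin_pow_four]; ring

theorem tendsto_avg_cos_affine_pow_four (h₂ : cos (2 * α) ≠ 1) (h₄ : cos (4 * α) ≠ 1)
    (ht : 0 < t) :
    Tendsto (fun L : ℕ => (1 / (L : ℝ)) *
        ∑ j ∈ Icc 1 ⌊(L : ℝ) * t⌋₊, cos (α * j + β) ^ 4) atTop (𝓝 (3 * t / 8)) := by
  have h := ((boundedPartialSums_cos_mul_affine α β 2 h₂).const_mul (1 / 2)).add
    ((boundedPartialSums_cos_mul_affine α β 4 h₄).const_mul (1 / 8))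
  convert tendsto_avg_floor_mul (c := 3 / 8) (h.congr fun j => ?_) ht using 2
  · ring
  · rw [cos_pow_four]; ring

theorem tendsto_avg_sin_affine_sq_mul_cos_sq (h₄ : cos (4 * α) ≠ 1) (ht : 0 < t) :
    Tendsto (fun L : ℕ => (1 / (L : ℝ)) *
        ∑ j ∈ Icc 1 ⌊(L : ℝ) * t⌋₊, sin (α * j + β) ^ 2 * cos (α * j + β) ^ 2)
      atTop (𝓝 (t / 8)) := by
  have h := (boundedPartialSums_cos_mul_affine α β 4 h₄).const_mul (-1 / 8)
  convert tendsto_avg_floor_mul (c := 1 / 8) (h.congr fun j => ?_) ht using 2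
  · ring
  · rw [sin_sq_mul_cos_sq]; ring

theorem tendsto_avg_cos_affine_pow_three_mul_sin (h₂ : cos (2 * α) ≠ 1)
    (h₄ : cos (4 * α) ≠ 1) (ht : 0 < t) :
    Tendsto (fun L : ℕ => (1 / (L : ℝ)) *
        ∑ j ∈ Icc 1 ⌊(L : ℝ) * t⌋₊, cos (α * j + β) ^ 3 * sin (α * j + β))
      atTop (𝓝 0) := by
  have h := ((boundedPartialSums_sin_mul_affine α β 2 h₂).const_mul (1 / 4)).add
    ((boundedPartialSums_sin_mul_affine α β 4 h₄).const_mul (1 / 8))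
  convert tendsto_avg_floor_mul (c := 0) (h.congr fun j => ?_) ht using 2
  · ring
  · rw [cos_pow_three_mul_sin]; ring

end AffinePhase

/-- for `k ∈ (−π, −π/2)`, `k ≠ −3π/4`, `ηⱼ = (2j−1)k`, all `x ∈ ℝ` and `t > 0`,
as `L → ∞`: `(1/L) Σ_{j=1}^{⌊Lt⌋} sin⁴(x − ηⱼ) → 3t/8`,
`(1/L) Σ_{j=1}^{⌊Lt⌋} cos⁴(x − ηⱼ) → 3t/8`,
`(1/L) Σ_{j=1}^{⌊Lt⌋} sin²(x − ηⱼ) cos²(x − ηⱼ) → t/8`, and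
`(1/L) Σ_{j=1}^{⌊Lt⌋} cos³(x − ηⱼ) sin(x − ηⱼ) → 0`. -/
theorem trig_sums_fourth_order (k : ℝ) (hk1 : -π < k) (hk2 : k < -(π / 2))
    (hk3 : k ≠ -(3 * π / 4)) (x t : ℝ) (ht : 0 < t) :
    Tendsto (fun L : ℕ => (1 / (L : ℝ)) *
        ∑ j ∈ Finset.Icc 1 ⌊(L : ℝ) * t⌋₊, Real.sin (x - (2 * (j : ℝ) - 1) * k) ^ 4)
      atTop (nhds (3 * t / 8)) ∧
    Tendsto (fun L : ℕ => (1 / (L : ℝ)) *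
        ∑ j ∈ Finset.Icc 1 ⌊(L : ℝ) * t⌋₊, Real.cos (x - (2 * (j : ℝ) - 1) * k) ^ 4)
      atTop (nhds (3 * t / 8)) ∧
    Tendsto (fun L : ℕ => (1 / (L : ℝ)) *
        ∑ j ∈ Finset.Icc 1 ⌊(L : ℝ) * t⌋₊,
          Real.sin (x - (2 * (j : ℝ) - 1) * k) ^ 2 *
            Real.cos (x - (2 * (j : ℝ) - 1) * k) ^ 2)
      atTop (nhds (t / 8)) ∧
    Tendsto (fun L : ℕ => (1 / (L : ℝ)) *
        ∑ j ∈ Finset.Icc 1 ⌊(L : ℝ) * t⌋₊,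
          Real.cos (x - (2 * (j : ℝ) - 1) * k) ^ 3 *
            Real.sin (x - (2 * (j : ℝ) - 1) * k))
      atTop (nhds 0) := by
  have hphase (j : ℝ) : x - (2 * j - 1) * k = -2 * k * j + (x + k) := by ring
  have h₂ : cos (2 * (-2 * k)) ≠ 1 :=
    cos_ne_one_of_lt_of_lt 1 (by push_cast; linarith) (by push_cast; linarith)
  have h₄ : cos (4 * (-2 * k)) ≠ 1 := by
    rcases hk3.lt_or_gt with hk | hk
    · exact cos_ne_one_of_lt_of_lt 3 (by push_cast; linarith) (by push_cast; linarith)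
    · exact cos_ne_one_of_lt_of_lt 2 (by push_cast; linarith) (by push_cast; linarith)
  simp only [hphase]
  exact ⟨tendsto_avg_sin_affine_pow_four _ _ _ h₂ h₄ ht,
    tendsto_avg_cos_affine_pow_four _ _ _ h₂ h₄ ht,
    tendsto_avg_sin_affine_sq_mul_cos_sq _ _ _ h₄ ht,
    tendsto_avg_cos_affine_pow_three_mul_sin _ _ _ h₂ h₄ ht⟩
end

section
/- Let k ∈ (−π, −π/2) with k ≠ −3π/4 and set ηⱼ = (2j−1)k. Then for all x ∈ ℝ, all t ∈ [0, 1), and all α ≥ 1/2, lim_{L→∞} Σ_{j=1}^{⌊Lt⌋} sin(x − ηⱼ)/(L − j)^α = 0 and lim_{L→∞} Σ_{j=1}^{⌊Lt⌋} cos(x − ηⱼ)/(L − j)^α = 0, where L runs over the positive integers. -/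
/-!
Since `sin k ≠ 0`, multiplying by `2 sin k` telescopes the partial sums of `cos (x - ηⱼ)` and
`sin (x - ηⱼ)`, so they are bounded by `1 / |sin k|`. The weights `(L - j)^(-α)` increase in `j`,
so Abel summation bounds the weighted sum up to `n = ⌊L t⌋` by `2 M (L - n)^(-α)
≤ 2 M (L (1 - t))^(-α)`, which tends to `0` because `α > 0` and `t < 1`.
-/

open Filter Real Finset

theorem sum_Icc_one_smul_by_parts {R E : Type*} [Ring R] [AddCommGroup E] [Module R E]
    (w : ℕ → R) (c : ℕ → E) (n : ℕ) :
    ∑ j ∈ Icc 1 n, w j • c j =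
      w n • ∑ j ∈ Icc 1 n, c j
        - ∑ j ∈ range n, (w (j + 1) - w j) • ∑ i ∈ Icc 1 j, c i := by
  induction n with
  | zero => simp
  | succ n ih =>
    rw [sum_Icc_succ_top (by omega), sum_Icc_succ_top (by omega), sum_range_succ, ih]
    simp only [smul_add, sub_smul]
    abel

theorem norm_sum_Icc_one_smul_le {E : Type*} [SeminormedAddCommGroup E] [NormedSpace ℝ E]
    {w : ℕ → ℝ} {c : ℕ → E} {M : ℝ} {n : ℕ} (hw : MonotoneOn w (Set.Iic n)) (hw0 : 0 ≤ w 0)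
    (hc : ∀ m, ‖∑ j ∈ Icc 1 m, c j‖ ≤ M) :
    ‖∑ j ∈ Icc 1 n, w j • c j‖ ≤ 2 * M * w n := by
  have hstep : ∀ j < n, w j ≤ w (j + 1) := fun j hj =>
    hw (Set.mem_Iic.2 hj.le) (Set.mem_Iic.2 hj) j.le_succ
  have hwn : w 0 ≤ w n := hw (Set.mem_Iic.2 n.zero_le) (Set.mem_Iic.2 le_rfl) n.zero_le
  rw [sum_Icc_one_smul_by_parts]
  calc _ ≤ ‖w n • ∑ j ∈ Icc 1 n, c j‖
          + ‖∑ j ∈ range n, (w (j + 1) - w j) • ∑ i ∈ Icc 1 j, c i‖ := norm_sub_le _ _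
    _ ≤ w n * M + ∑ j ∈ range n, (w (j + 1) - w j) * M := by
        gcongr
        · rw [norm_smul, norm_of_nonneg (hw0.trans hwn)]
          exact mul_le_mul_of_nonneg_left (hc n) (hw0.trans hwn)
        · refine (norm_sum_le _ _).trans (sum_le_sum fun j hj => ?_)
          have hj' := hstep j (mem_range.1 hj)
          rw [norm_smul, norm_of_nonneg (sub_nonneg.2 hj')]
          exact mul_le_mul_of_nonneg_left (hc j) (sub_nonneg.2 hj')
    _ = w n * M + (w n - w 0) * M := by rw [← sum_mul, sum_range_sub]
    _ ≤ 2 * M * w n := by nlinarith [(norm_nonneg _).trans (hc 0)]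

section DecayingWeights

variable {c : ℕ → ℝ} {M : ℝ}

theorem abs_sum_Icc_one_div_rpow_le (hc : ∀ m, |∑ j ∈ Icc 1 m, c j| ≤ M) {α L : ℝ}
    (hα : 0 ≤ α) {n : ℕ} (hn : (n : ℝ) < L) :
    |∑ j ∈ Icc 1 n, c j / (L - j) ^ α| ≤ 2 * M * ((L - n) ^ α)⁻¹ := by
  have hw : MonotoneOn (fun j : ℕ => ((L - j) ^ α)⁻¹) (Set.Iic n) := by
    intro i _ j hj hij
    have hj : (j : ℝ) ≤ n := by exact_mod_cast Set.mem_Iic.1 hj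
    have hij : (i : ℝ) ≤ j := by exact_mod_cast hij
    exact inv_anti₀ (rpow_pos_of_pos (by linarith) α) (rpow_le_rpow (by linarith) (by linarith) hα)
  have hw0 : 0 ≤ ((L - (0 : ℕ)) ^ α)⁻¹ :=
    inv_nonneg.2 (rpow_nonneg (by rw [Nat.cast_zero, sub_zero]; linarith [n.cast_nonneg (α := ℝ)]) _)
  simpa only [smul_eq_mul, div_eq_inv_mul, Real.norm_eq_abs] using
    norm_sum_Icc_one_smul_le hw hw0 fun m => (Real.norm_eq_abs _).trans_le (hc m)

theorem tendsto_sum_Icc_one_floor_div_rpow (hc : ∀ m, |∑ j ∈ Icc 1 m, c j| ≤ M) {t α : ℝ}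
    (ht0 : 0 ≤ t) (ht1 : t < 1) (hα : 0 < α) :
    Tendsto (fun L : ℕ => ∑ j ∈ Icc 1 ⌊(L : ℝ) * t⌋₊, c j / ((L : ℝ) - j) ^ α)
      atTop (nhds 0) := by
  have hM : 0 ≤ M := by simpa using hc 0
  have hlim : Tendsto (fun L : ℕ => 2 * M * (((L : ℝ) * (1 - t)) ^ α)⁻¹) atTop (nhds 0) := by
    have h := (tendsto_natCast_atTop_atTop (R := ℝ)).atTop_mul_const (sub_pos.2 ht1)
    simpa using ((tendsto_rpow_atTop hα).comp h).inv_tendsto_atTop.const_mul (2 * M)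
  refine squeeze_zero_norm' ?_ hlim
  filter_upwards [eventually_ge_atTop 1] with L hL
  have hL : (1 : ℝ) ≤ L := by exact_mod_cast hL
  have hfloor : (⌊(L : ℝ) * t⌋₊ : ℝ) ≤ L * t := Nat.floor_le (by positivity)
  have hgap : 0 < (L : ℝ) * (1 - t) := by nlinarith
  rw [Real.norm_eq_abs]
  calc _ ≤ 2 * M * (((L : ℝ) - ⌊(L : ℝ) * t⌋₊) ^ α)⁻¹ :=
        abs_sum_Icc_one_div_rpow_le hc hα.le (by linarith)
    _ ≤ 2 * M * (((L : ℝ) * (1 - t)) ^ α)⁻¹ := by gcongr; linarith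

end DecayingWeights

theorem two_mul_sin_mul_sum_cos (k x : ℝ) (m : ℕ) :
    2 * sin k * ∑ j ∈ Icc 1 m, cos (x - (2 * (j : ℝ) - 1) * k) = sin x - sin (x - 2 * m * k) := by
  induction m with
  | zero => simp
  | succ m ih =>
    rw [sum_Icc_succ_top (by omega), mul_add, ih]
    have h₁ : x - 2 * (m : ℝ) * k = (x - (2 * (m + 1 : ℕ) - 1) * k) + k := by push_cast; ring
    have h₂ : x - 2 * ((m + 1 : ℕ) : ℝ) * k = (x - (2 * (m + 1 : ℕ) - 1) * k) - k := by ring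
    have sin_add_sub_sin_sub (A : ℝ) : sin (A + k) - sin (A - k) = 2 * sin k * cos A := by
      rw [sin_add, sin_sub]; ring
    rw [h₁, h₂]
    linarith [sin_add_sub_sin_sub (x - (2 * (m + 1 : ℕ) - 1) * k)]

theorem abs_sum_cos_le {k : ℝ} (hk : sin k ≠ 0) (x : ℝ) (m : ℕ) :
    |∑ j ∈ Icc 1 m, cos (x - (2 * (j : ℝ) - 1) * k)| ≤ 1 / |sin k| := by
  have hsin : 0 < |sin k| := abs_pos.2 hk
  have h : |2 * sin k * ∑ j ∈ Icc 1 m, cos (x - (2 * (j : ℝ) - 1) * k)| ≤ 2 := by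
    rw [two_mul_sin_mul_sum_cos]
    calc |sin x - sin (x - 2 * m * k)| ≤ |sin x| + |sin (x - 2 * m * k)| := abs_sub _ _
      _ ≤ 2 := by linarith [abs_sin_le_one x, abs_sin_le_one (x - 2 * m * k)]
  rw [abs_mul, abs_mul, abs_two] at h
  rw [le_div_iff₀ hsin]
  linarith

theorem abs_sum_sin_le {k : ℝ} (hk : sin k ≠ 0) (x : ℝ) (m : ℕ) :
    |∑ j ∈ Icc 1 m, sin (x - (2 * (j : ℝ) - 1) * k)| ≤ 1 / |sin k| := by
  convert abs_sum_cos_le hk (x - π / 2) m using 4 with j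
  rw [← cos_sub_pi_div_two]
  ring_nf

theorem trig_sums_decaying_first_order_general (k : ℝ) (hk1 : -π < k) (hk2 : k < -(π / 2))
    (x t α : ℝ) (ht0 : 0 ≤ t) (ht1 : t < 1)
    (hα : 1 / 2 ≤ α) :
    Tendsto (fun L : ℕ => ∑ j ∈ Finset.Icc 1 ⌊(L : ℝ) * t⌋₊,
        Real.sin (x - (2 * (j : ℝ) - 1) * k) / ((L : ℝ) - (j : ℝ)) ^ α)
      atTop (nhds 0) ∧
    Tendsto (fun L : ℕ => ∑ j ∈ Finset.Icc 1 ⌊(L : ℝ) * t⌋₊,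
        Real.cos (x - (2 * (j : ℝ) - 1) * k) / ((L : ℝ) - (j : ℝ)) ^ α)
      atTop (nhds 0) := by
  have hk : sin k ≠ 0 := (sin_neg_of_neg_of_neg_pi_lt (by linarith [pi_pos]) hk1).ne
  have hα0 : 0 < α := by linarith
  exact ⟨tendsto_sum_Icc_one_floor_div_rpow (abs_sum_sin_le hk x) ht0 ht1 hα0,
    tendsto_sum_Icc_one_floor_div_rpow (abs_sum_cos_le hk x) ht0 ht1 hα0⟩

/-- for `k ∈ (−π, −π/2)`, `k ≠ −3π/4`, `ηⱼ = (2j−1)k`, all `x ∈ ℝ`,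
`t ∈ [0,1)` and `α ≥ 1/2`, `Σ_{j=1}^{⌊Lt⌋} sin(x − ηⱼ)/(L − j)^α → 0` and
`Σ_{j=1}^{⌊Lt⌋} cos(x − ηⱼ)/(L − j)^α → 0` as `L → ∞`. -/
theorem trig_sums_decaying_first_order (k : ℝ) (hk1 : -π < k) (hk2 : k < -(π / 2))
    (hk3 : k ≠ -(3 * π / 4)) (x t α : ℝ) (ht0 : 0 ≤ t) (ht1 : t < 1)
    (hα : 1 / 2 ≤ α) :
    Tendsto (fun L : ℕ => ∑ j ∈ Finset.Icc 1 ⌊(L : ℝ) * t⌋₊,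
        Real.sin (x - (2 * (j : ℝ) - 1) * k) / ((L : ℝ) - (j : ℝ)) ^ α)
      atTop (nhds 0) ∧
    Tendsto (fun L : ℕ => ∑ j ∈ Finset.Icc 1 ⌊(L : ℝ) * t⌋₊,
        Real.cos (x - (2 * (j : ℝ) - 1) * k) / ((L : ℝ) - (j : ℝ)) ^ α)
      atTop (nhds 0) :=
  trig_sums_decaying_first_order_general k hk1 hk2 x t α ht0 ht1 hα
end

section
/- Let k ∈ (−π, −π/2) with k ≠ −3π/4 and set ηⱼ = (2j−1)k. Then for all x ∈ ℝ and all t ∈ [0, 1), as L → ∞ over the positive integers: if α > 1/2 then Σ_{j=1}^{⌊Lt⌋} sin⁴(x − ηⱼ)/(L − j)^{2α} → 0, Σ_{j=1}^{⌊Lt⌋} cos⁴(x − ηⱼ)/(L − j)^{2α} → 0, and Σ_{j=1}^{⌊Lt⌋} sin²(x − ηⱼ) cos²(x − ηⱼ)/(L − j)^{2α} → 0; if α = 1/2 then Σ_{j=1}^{⌊Lt⌋} sin⁴(x − ηⱼ)/(L − j) → −(3/8) log(1 − t), Σ_{j=1}^{⌊Lt⌋} cos⁴(x − ηⱼ)/(L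 − j) → −(3/8) log(1 − t), and Σ_{j=1}^{⌊Lt⌋} sin²(x − ηⱼ) cos²(x − ηⱼ)/(L − j) → −(1/8) log(1 − t); and for all α ≥ 1/2, Σ_{j=1}^{⌊Lt⌋} cos³(x − ηⱼ) sin(x − ηⱼ)/(L − j)^{2α} → 0. -/
/-!
Put `θⱼ = x - (2j - 1)k`. Each fourth-order monomial in `sin θⱼ, cos θⱼ` is a constant plus a
combination of `cos` or `sin` of `2θⱼ` and `4θⱼ`, whose phases advance by `4k` and `8k` per step.
As `sin 2k ≠ 0` and `sin 4k ≠ 0`, these oscillating parts have bounded partial sums, and Abel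
summation against the increasing weights `(L - j)^(-2α)`, all at most `(L - ⌊Lt⌋ - 1)^(-2α) → 0`,
makes them vanish in the limit. The constant part is `Σ (L - j)^(-2α)`: for `2α = 1` it is squeezed
between `log L - log (L - ⌊Lt⌋)` and the same expression at `L - 1`, both tending to
`-log (1 - t)`, and for `2α > 1` it is at most `(L - ⌊Lt⌋)^(1 - 2α)` times that sum.
-/

open Filter Real Finset Topology

theorem sum_Icc_one_eq_sum_range {M : Type*} [AddCommMonoid M] (g : ℕ → M) (n : ℕ) :
    ∑ j ∈ Icc 1 n, g j = ∑ i ∈ range n, g (i + 1) := by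
  rw [← Ico_add_one_right_eq_Icc, sum_Ico_eq_sum_range, add_tsub_cancel_right]
  simp only [add_comm]

theorem norm_sum_range_smul_le_of_monotoneOn {E : Type*} [NormedAddCommGroup E]
    [NormedSpace ℝ E] {f : ℕ → ℝ} {z : ℕ → E} {b : ℝ} {n : ℕ} (hf0 : 0 ≤ f 0)
    (hf : MonotoneOn f (Set.Iic n)) (hz : ∀ m ≤ n, ‖∑ i ∈ range m, z i‖ ≤ b) :
    ‖∑ i ∈ range n, f i • z i‖ ≤ 2 * b * f n := by
  have hb : 0 ≤ b := (norm_nonneg _).trans (hz 0 n.zero_le)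
  have hmono : ∀ {i j}, i ≤ j → j ≤ n → f i ≤ f j := fun hij hj =>
    hf (Set.mem_Iic.2 (hij.trans hj)) (Set.mem_Iic.2 hj) hij
  have hlast : 0 ≤ f (n - 1) := hf0.trans (hmono (n - 1).zero_le (n.sub_le 1))
  rw [sum_range_by_parts]
  calc ‖f (n - 1) • ∑ i ∈ range n, z i
        - ∑ i ∈ range (n - 1), (f (i + 1) - f i) • ∑ j ∈ range (i + 1), z j‖
      ≤ f (n - 1) * b + ∑ i ∈ range (n - 1), (f (i + 1) - f i) * b := by
        refine (norm_sub_le _ _).trans (add_le_add ?_ ((norm_sum_le _ _).trans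
          (sum_le_sum fun i hi => ?_)))
        · rw [norm_smul, Real.norm_of_nonneg hlast]
          exact mul_le_mul_of_nonneg_left (hz n le_rfl) hlast
        · have hi : i + 1 ≤ n := by have := mem_range.1 hi; omega
          have hstep : 0 ≤ f (i + 1) - f i := sub_nonneg.2 (hmono i.le_succ hi)
          rw [norm_smul, Real.norm_of_nonneg hstep]
          exact mul_le_mul_of_nonneg_left (hz (i + 1) hi) hstep
    _ = (2 * f (n - 1) - f 0) * b := by
        rw [← sum_mul, sum_range_sub (fun i => f i)]; ring
    _ ≤ 2 * b * f n := by nlinarith [hmono (n.sub_le 1) le_rfl]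

theorem abs_sum_Icc_cos_sub_mul_le (a : ℝ) {b : ℝ} (hb : sin (b / 2) ≠ 0) (m : ℕ) :
    |∑ j ∈ Icc 1 m, cos (a - b * j)| ≤ |sin (b / 2)|⁻¹ := by
  -- `2 sin (b/2) cos (a - bj) = sin (a - bj + b/2) - sin (a - bj - b/2)` telescopes.
  have htele : 2 * sin (b / 2) * ∑ j ∈ Icc 1 m, cos (a - b * j)
      = sin (a - b / 2) - sin (a - b * m - b / 2) := by
    rw [mul_sum, sum_Icc_one_eq_sum_range]
    convert sum_range_sub' (fun i : ℕ => sin (a - b * i - b / 2)) m using 2 with i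
    · rw [sin_sub_sin]; push_cast; ring_nf
    · simp
  have hbound : |2 * sin (b / 2) * ∑ j ∈ Icc 1 m, cos (a - b * j)| ≤ 2 := by
    rw [htele]
    linarith [abs_sub (sin (a - b / 2)) (sin (a - b * m - b / 2)), abs_sin_le_one (a - b / 2),
      abs_sin_le_one (a - b * m - b / 2)]
  rw [abs_mul, abs_mul, abs_two] at hbound
  rw [← one_div, le_div_iff₀' (abs_pos.2 hb)]
  linarith

theorem log_add_one_sub_log_le_inv {y : ℝ} (hy : 0 < y) : log (y + 1) - log y ≤ y⁻¹ := by
  have h := log_le_sub_one_of_pos (show 0 < (y + 1) / y by positivity)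
  rw [log_div (by positivity) hy.ne', add_div, div_self hy.ne', one_div] at h
  linarith

theorem inv_le_log_sub_log_sub_one {y : ℝ} (hy : 1 < y) : y⁻¹ ≤ log y - log (y - 1) := by
  have h := log_le_sub_one_of_pos (show 0 < (y - 1) / y by apply div_pos <;> linarith)
  rw [log_div (by linarith) (by linarith), sub_div, div_self (by linarith), one_div] at h
  linarith

theorem log_sub_log_le_sum_range_inv {a : ℝ} {n : ℕ} (h : (n : ℝ) < a) :
    log a - log (a - n) ≤ ∑ i ∈ range n, (a - (i + 1))⁻¹ := by
  induction n with
  | zero => simp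
  | succ n ih =>
    push_cast at h
    have hstep := log_add_one_sub_log_le_inv (show 0 < a - (n + 1) by linarith)
    rw [sum_range_succ, Nat.cast_succ, show a - (n + 1) + 1 = a - n by ring] at *
    linarith [ih (by linarith)]

theorem sum_range_inv_le_log_sub_log {a : ℝ} {n : ℕ} (h : (n : ℝ) + 1 < a) :
    ∑ i ∈ range n, (a - (i + 1))⁻¹ ≤ log (a - 1) - log (a - 1 - n) := by
  induction n with
  | zero => simp
  | succ n ih =>
    push_cast at h
    have hstep := inv_le_log_sub_log_sub_one (show 1 < a - (n + 1) by linarith)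
    have ih := ih (by linarith)
    rw [show a - 1 - n = a - (n + 1) by ring] at ih
    rw [sum_range_succ, Nat.cast_succ, show a - 1 - (n + 1) = a - (n + 1) - 1 by ring]
    linarith

/-- Reducible, so that sums written out in full are recognised as window sums. -/
noncomputable abbrev windowSum (t p : ℝ) (c : ℕ → ℝ) (L : ℕ) : ℝ :=
  ∑ j ∈ Icc 1 ⌊(L : ℝ) * t⌋₊, c j / ((L : ℝ) - j) ^ p

theorem windowSum_one (t : ℝ) (c : ℕ → ℝ) :
    windowSum t 1 c = fun L : ℕ => ∑ j ∈ Icc 1 ⌊(L : ℝ) * t⌋₊, c j / ((L : ℝ) - j) := by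
  ext L
  simp only [windowSum, rpow_one]

section Window

variable {t p : ℝ}

theorem tendsto_sub_floor_mul_atTop (ht0 : 0 ≤ t) (ht1 : t < 1) :
    Tendsto (fun L : ℕ => (L : ℝ) - ⌊(L : ℝ) * t⌋₊) atTop atTop := by
  refine tendsto_atTop_mono (fun L => ?_)
    ((tendsto_natCast_atTop_atTop (R := ℝ)).atTop_mul_const (sub_pos.2 ht1))
  nlinarith [Nat.floor_le (mul_nonneg L.cast_nonneg ht0)]

theorem tendsto_windowSum_of_bounded (ht0 : 0 ≤ t) (ht1 : t < 1) (hp : 0 < p) {c : ℕ → ℝ}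
    {M : ℝ} (hM : ∀ m, |∑ j ∈ Icc 1 m, c j| ≤ M) :
    Tendsto (windowSum t p c) atTop (𝓝 0) := by
  have hgap : Tendsto (fun L : ℕ => (L : ℝ) - (⌊(L : ℝ) * t⌋₊ + 1)) atTop atTop :=
    (tendsto_atTop_add_const_right _ (-1) (tendsto_sub_floor_mul_atTop ht0 ht1)).congr
      fun L => by ring
  have hbound : Tendsto (fun L : ℕ => 2 * M * (((L : ℝ) - (⌊(L : ℝ) * t⌋₊ + 1)) ^ p)⁻¹)
      atTop (𝓝 0) := by
    simpa using ((tendsto_rpow_atTop hp).comp hgap).inv_tendsto_atTop.const_mul (2 * M)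
  refine squeeze_zero_norm' ?_ hbound
  filter_upwards [hgap.eventually_ge_atTop 1] with L hL
  set N := ⌊(L : ℝ) * t⌋₊
  have hbase : ∀ i ≤ N, 1 ≤ (L : ℝ) - (i + 1) := fun i hi => by
    have : (i : ℝ) ≤ N := by exact_mod_cast hi
    linarith
  have hweight : MonotoneOn (fun i : ℕ => (((L : ℝ) - (i + 1)) ^ p)⁻¹) (Set.Iic N) :=
    fun i hi j hj hij => by
      have hij' : (i : ℝ) ≤ j := by exact_mod_cast hij
      have := hbase j hj
      exact inv_anti₀ (by positivity) (rpow_le_rpow (by linarith) (by linarith) hp.le)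
  have habel := norm_sum_range_smul_le_of_monotoneOn (z := fun i => c (i + 1))
    (inv_nonneg.2 (rpow_nonneg (by linarith [hbase 0 N.zero_le]) p)) hweight
    (fun m _ => by simpa only [← sum_Icc_one_eq_sum_range, Real.norm_eq_abs] using hM m)
  simpa [windowSum, sum_Icc_one_eq_sum_range, div_eq_inv_mul] using habel

theorem tendsto_log_sub_log_sub_floor_mul (ht0 : 0 ≤ t) (ht1 : t < 1) (d : ℝ) :
    Tendsto (fun L : ℕ => log (L - d) - log (L - d - ⌊(L : ℝ) * t⌋₊)) atTop
      (𝓝 (-log (1 - t))) := by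
  have hfloor : Tendsto (fun L : ℕ => (⌊(L : ℝ) * t⌋₊ : ℝ) / L) atTop (𝓝 t) := by
    simpa only [mul_comm _ t, Function.comp_def] using
      (tendsto_nat_floor_mul_div_atTop ht0).comp tendsto_natCast_atTop_atTop
  have hfrac : Tendsto (fun L : ℕ => (⌊(L : ℝ) * t⌋₊ : ℝ) / (L - d)) atTop (𝓝 t) := by
    refine (mul_one t ▸ hfloor.mul (tendsto_natCast_div_add_atTop (-d))).congr' ?_
    filter_upwards [eventually_ne_atTop 0] with L hL
    rw [← sub_eq_add_neg, div_mul_div_cancel₀ (by exact_mod_cast hL)]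
  have hgap := tendsto_atTop_add_const_right _ (-d) (tendsto_sub_floor_mul_atTop ht0 ht1)
  refine ((tendsto_const_nhds.sub hfrac).log (sub_pos.2 ht1).ne').neg.congr' ?_
  filter_upwards [hgap.eventually_gt_atTop 0] with L hL
  have hpos : 0 < (L : ℝ) - d := by linarith [Nat.cast_nonneg (α := ℝ) ⌊(L : ℝ) * t⌋₊]
  rw [one_sub_div hpos.ne', log_div (by linarith) hpos.ne']
  ring

theorem tendsto_windowSum_harmonic (ht0 : 0 ≤ t) (ht1 : t < 1) :
    Tendsto (windowSum t 1 1) atTop (𝓝 (-log (1 - t))) := by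
  have hsum : ∀ L, windowSum t 1 1 L = ∑ i ∈ range ⌊(L : ℝ) * t⌋₊, ((L : ℝ) - (i + 1))⁻¹ := by
    simp [windowSum, sum_Icc_one_eq_sum_range]
  have hgap := (tendsto_sub_floor_mul_atTop ht0 ht1).eventually_gt_atTop 1
  refine tendsto_of_tendsto_of_tendsto_of_le_of_le'
    (tendsto_log_sub_log_sub_floor_mul ht0 ht1 0) (tendsto_log_sub_log_sub_floor_mul ht0 ht1 1)
    ?_ ?_ <;> filter_upwards [hgap] with L hL <;> rw [hsum]
  · simpa using log_sub_log_le_sum_range_inv (a := L) (by linarith)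
  · exact sum_range_inv_le_log_sub_log (by linarith)

theorem tendsto_windowSum_one_of_one_lt (ht0 : 0 ≤ t) (ht1 : t < 1) (hp : 1 < p) :
    Tendsto (windowSum t p 1) atTop (𝓝 0) := by
  have hgap := tendsto_sub_floor_mul_atTop ht0 ht1
  have hbound := (((tendsto_rpow_atTop (sub_pos.2 hp)).comp hgap).inv_tendsto_atTop).mul
    (tendsto_windowSum_harmonic ht0 ht1)
  rw [zero_mul] at hbound
  have hbase : ∀ L : ℕ, ∀ j ∈ Icc 1 ⌊(L : ℝ) * t⌋₊, (L : ℝ) - ⌊(L : ℝ) * t⌋₊ ≤ L - j :=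
    fun L j hj => by
      have : (j : ℝ) ≤ ⌊(L : ℝ) * t⌋₊ := by exact_mod_cast (mem_Icc.1 hj).2
      linarith
  refine squeeze_zero' ?_ ?_ hbound <;> filter_upwards [hgap.eventually_ge_atTop 1] with L hL
  · exact sum_nonneg fun j hj =>
      div_nonneg zero_le_one (rpow_nonneg (by linarith [hbase L j hj]) p)
  · rw [windowSum, windowSum, mul_sum]
    refine sum_le_sum fun j hj => ?_
    have hy : 1 ≤ (L : ℝ) - j := hL.trans (hbase L j hj)
    have hsplit : (((L : ℝ) - j) ^ p)⁻¹ = (((L : ℝ) - j) ^ (p - 1))⁻¹ * ((L : ℝ) - j)⁻¹ := by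
      rw [rpow_sub_one (by linarith)]
      field_simp
    simp only [Pi.one_apply, Pi.inv_apply, Function.comp_apply, rpow_one, one_div, hsplit]
    gcongr
    exact (mem_Icc.1 hj).2

end Window

theorem sin_pow_four_eq (θ : ℝ) :
    sin θ ^ 4 = 3 / 8 + -(1 / 2) * cos (2 * θ) + 1 / 8 * cos (4 * θ) := by
  rw [show 4 * θ = 2 * (2 * θ) by ring, cos_two_mul (2 * θ), cos_two_mul θ]
  linear_combination (sin θ ^ 2 - cos θ ^ 2 + 1) * sin_sq_add_cos_sq θ

theorem cos_pow_four_eq (θ : ℝ) :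
    cos θ ^ 4 = 3 / 8 + 1 / 2 * cos (2 * θ) + 1 / 8 * cos (4 * θ) := by
  rw [show 4 * θ = 2 * (2 * θ) by ring, cos_two_mul (2 * θ), cos_two_mul θ]
  ring

theorem sin_sq_mul_cos_sq_eq (θ : ℝ) :
    sin θ ^ 2 * cos θ ^ 2 = 1 / 8 + 0 * cos (2 * θ) + -(1 / 8) * cos (4 * θ) := by
  rw [show 4 * θ = 2 * (2 * θ) by ring, cos_two_mul (2 * θ), cos_two_mul θ]
  linear_combination cos θ ^ 2 * sin_sq_add_cos_sq θ

theorem cos_pow_three_mul_sin_eq (θ : ℝ) :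
    cos θ ^ 3 * sin θ = 1 / 4 * sin (2 * θ) + 1 / 8 * sin (4 * θ) := by
  rw [show 4 * θ = 2 * (2 * θ) by ring, sin_two_mul (2 * θ), sin_two_mul θ, cos_two_mul θ]
  ring

section Phase

variable {t p : ℝ} (x : ℝ) {k : ℝ}

theorem tendsto_windowSum_cos_mul_phase (ht0 : 0 ≤ t) (ht1 : t < 1) (hp : 0 < p) {n : ℝ}
    (hn : sin (n * k) ≠ 0) :
    Tendsto (windowSum t p fun j => cos (n * (x - (2 * j - 1) * k))) atTop (𝓝 0) := by
  have hb : sin (2 * n * k / 2) ≠ 0 := by rwa [mul_assoc, mul_div_cancel_left₀ _ two_ne_zero]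
  convert tendsto_windowSum_of_bounded ht0 ht1 hp
    (abs_sum_Icc_cos_sub_mul_le (n * x + n * k) hb) using 3 with j
  ring_nf

theorem tendsto_windowSum_sin_mul_phase (ht0 : 0 ≤ t) (ht1 : t < 1) (hp : 0 < p) {n : ℝ}
    (hn : sin (n * k) ≠ 0) :
    Tendsto (windowSum t p fun j => sin (n * (x - (2 * j - 1) * k))) atTop (𝓝 0) := by
  have hb : sin (2 * n * k / 2) ≠ 0 := by rwa [mul_assoc, mul_div_cancel_left₀ _ two_ne_zero]
  convert tendsto_windowSum_of_bounded ht0 ht1 hp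
    (abs_sum_Icc_cos_sub_mul_le (n * x + n * k - π / 2) hb) using 3 with j
  rw [← cos_sub_pi_div_two]
  ring_nf

theorem tendsto_windowSum_of_cos_expansion (ht0 : 0 ≤ t) (ht1 : t < 1) (hp : 0 < p)
    (h2 : sin (2 * k) ≠ 0) (h4 : sin (4 * k) ≠ 0) {ℓ : ℝ}
    (hconst : Tendsto (windowSum t p 1) atTop (𝓝 ℓ)) {f : ℝ → ℝ} {A B C : ℝ}
    (hf : ∀ θ, f θ = A + B * cos (2 * θ) + C * cos (4 * θ)) :
    Tendsto (windowSum t p fun j => f (x - (2 * j - 1) * k)) atTop (𝓝 (A * ℓ)) := by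
  have hlin := ((hconst.const_mul A).add
    ((tendsto_windowSum_cos_mul_phase x ht0 ht1 hp h2).const_mul B)).add
    ((tendsto_windowSum_cos_mul_phase x ht0 ht1 hp h4).const_mul C)
  rw [mul_zero, mul_zero, add_zero, add_zero] at hlin
  refine hlin.congr fun L => ?_
  simp only [windowSum, mul_sum, ← sum_add_distrib, hf, Pi.one_apply]
  exact sum_congr rfl fun j _ => by ring

theorem tendsto_windowSum_of_sin_expansion (ht0 : 0 ≤ t) (ht1 : t < 1) (hp : 0 < p)
    (h2 : sin (2 * k) ≠ 0) (h4 : sin (4 * k) ≠ 0) {f : ℝ → ℝ} {D E : ℝ}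
    (hf : ∀ θ, f θ = D * sin (2 * θ) + E * sin (4 * θ)) :
    Tendsto (windowSum t p fun j => f (x - (2 * j - 1) * k)) atTop (𝓝 0) := by
  have hlin := ((tendsto_windowSum_sin_mul_phase x ht0 ht1 hp h2).const_mul D).add
    ((tendsto_windowSum_sin_mul_phase x ht0 ht1 hp h4).const_mul E)
  rw [mul_zero, mul_zero, add_zero] at hlin
  refine hlin.congr fun L => ?_
  simp only [windowSum, mul_sum, ← sum_add_distrib, hf]
  exact sum_congr rfl fun j _ => by ring

end Phase

theorem sin_two_mul_ne_zero_of_mem_Ioo {k : ℝ} (hk1 : -π < k) (hk2 : k < -(π / 2)) :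
    sin (2 * k) ≠ 0 := by
  rw [← sin_add_two_pi]
  exact (sin_pos_of_pos_of_lt_pi (by linarith) (by linarith)).ne'

theorem sin_four_mul_ne_zero_of_mem_Ioo {k : ℝ} (hk1 : -π < k) (hk2 : k < -(π / 2))
    (hk3 : k ≠ -(3 * π / 4)) : sin (4 * k) ≠ 0 := by
  have hshift : sin (4 * k + 3 * π) = -sin (4 * k) := by
    rw [show 4 * k + 3 * π = 4 * k + π + 2 * π by ring, sin_add_two_pi, sin_add_pi]
  intro h
  rw [h, neg_zero, sin_eq_zero_iff_of_lt_of_lt (by linarith) (by linarith)] at hshift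
  exact hk3 (by linarith)

/-- for `k ∈ (−π, −π/2)`, `k ≠ −3π/4`, `ηⱼ = (2j−1)k`, all `x ∈ ℝ` and
`t ∈ [0,1)`: if `α > 1/2` the sums `Σ_{j=1}^{⌊Lt⌋} sin⁴(x−ηⱼ)/(L−j)^{2α}`,
`Σ cos⁴(x−ηⱼ)/(L−j)^{2α}` and `Σ sin²(x−ηⱼ)cos²(x−ηⱼ)/(L−j)^{2α}` tend to `0`; if
`α = 1/2` they tend to `−(3/8)log(1−t)`, `−(3/8)log(1−t)` and `−(1/8)log(1−t)`
respectively; and for all `α ≥ 1/2`, `Σ cos³(x−ηⱼ)sin(x−ηⱼ)/(L−j)^{2α} → 0`. -/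
theorem trig_sums_decaying_fourth_order (k : ℝ) (hk1 : -π < k) (hk2 : k < -(π / 2))
    (hk3 : k ≠ -(3 * π / 4)) (x t : ℝ) (ht0 : 0 ≤ t) (ht1 : t < 1) :
    (∀ α : ℝ, 1 / 2 < α →
      Tendsto (fun L : ℕ => ∑ j ∈ Finset.Icc 1 ⌊(L : ℝ) * t⌋₊,
          Real.sin (x - (2 * (j : ℝ) - 1) * k) ^ 4 / ((L : ℝ) - (j : ℝ)) ^ (2 * α))
        atTop (nhds 0) ∧
      Tendsto (fun L : ℕ => ∑ j ∈ Finset.Icc 1 ⌊(L : ℝ) * t⌋₊,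
          Real.cos (x - (2 * (j : ℝ) - 1) * k) ^ 4 / ((L : ℝ) - (j : ℝ)) ^ (2 * α))
        atTop (nhds 0) ∧
      Tendsto (fun L : ℕ => ∑ j ∈ Finset.Icc 1 ⌊(L : ℝ) * t⌋₊,
          Real.sin (x - (2 * (j : ℝ) - 1) * k) ^ 2 *
            Real.cos (x - (2 * (j : ℝ) - 1) * k) ^ 2 / ((L : ℝ) - (j : ℝ)) ^ (2 * α))
        atTop (nhds 0)) ∧
    (Tendsto (fun L : ℕ => ∑ j ∈ Finset.Icc 1 ⌊(L : ℝ) * t⌋₊,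
        Real.sin (x - (2 * (j : ℝ) - 1) * k) ^ 4 / ((L : ℝ) - (j : ℝ)))
      atTop (nhds (-(3 / 8) * Real.log (1 - t))) ∧
    Tendsto (fun L : ℕ => ∑ j ∈ Finset.Icc 1 ⌊(L : ℝ) * t⌋₊,
        Real.cos (x - (2 * (j : ℝ) - 1) * k) ^ 4 / ((L : ℝ) - (j : ℝ)))
      atTop (nhds (-(3 / 8) * Real.log (1 - t))) ∧
    Tendsto (fun L : ℕ => ∑ j ∈ Finset.Icc 1 ⌊(L : ℝ) * t⌋₊,
        Real.sin (x - (2 * (j : ℝ) - 1) * k) ^ 2 *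
          Real.cos (x - (2 * (j : ℝ) - 1) * k) ^ 2 / ((L : ℝ) - (j : ℝ)))
      atTop (nhds (-(1 / 8) * Real.log (1 - t)))) ∧
    (∀ α : ℝ, 1 / 2 ≤ α →
      Tendsto (fun L : ℕ => ∑ j ∈ Finset.Icc 1 ⌊(L : ℝ) * t⌋₊,
          Real.cos (x - (2 * (j : ℝ) - 1) * k) ^ 3 *
            Real.sin (x - (2 * (j : ℝ) - 1) * k) / ((L : ℝ) - (j : ℝ)) ^ (2 * α))
        atTop (nhds 0)) := by
  have h2 := sin_two_mul_ne_zero_of_mem_Ioo hk1 hk2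
  have h4 := sin_four_mul_ne_zero_of_mem_Ioo hk1 hk2 hk3
  have hlog := tendsto_windowSum_harmonic ht0 ht1
  refine ⟨fun α hα => ?_, ⟨?_, ?_, ?_⟩, fun α hα => ?_⟩
  · have hp : 0 < 2 * α := by linarith
    have hconst := tendsto_windowSum_one_of_one_lt ht0 ht1 (by linarith : 1 < 2 * α)
    refine ⟨?_, ?_, ?_⟩
    · simpa using
        tendsto_windowSum_of_cos_expansion x ht0 ht1 hp h2 h4 hconst sin_pow_four_eq
    · simpa using
        tendsto_windowSum_of_cos_expansion x ht0 ht1 hp h2 h4 hconst cos_pow_four_eq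
    · simpa using
        tendsto_windowSum_of_cos_expansion x ht0 ht1 hp h2 h4 hconst sin_sq_mul_cos_sq_eq
  · simpa [windowSum_one] using
      tendsto_windowSum_of_cos_expansion x ht0 ht1 one_pos h2 h4 hlog sin_pow_four_eq
  · simpa [windowSum_one] using
      tendsto_windowSum_of_cos_expansion x ht0 ht1 one_pos h2 h4 hlog cos_pow_four_eq
  · simpa [windowSum_one] using
      tendsto_windowSum_of_cos_expansion x ht0 ht1 one_pos h2 h4 hlog sin_sq_mul_cos_sq_eq
  · simpa using
      tendsto_windowSum_of_sin_expansion x ht0 ht1 (by linarith) h2 h4 cos_pow_three_mul_sin_eq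
end

section
/- Convergence of level-set counting measures for increasing functions: let f_L (L ≥ 1) and f be continuous, strictly increasing functions from ℝ to ℝ such that f_L → f uniformly on every compact subset of ℝ. Then the sets {λ ∈ ℝ : f_L(λ) ∈ 2πℤ} and {λ ∈ ℝ : f(λ) ∈ 2πℤ} are locally finite, and for every continuous non-negative compactly supported function g : ℝ → ℝ, Σ_{λ : f_L(λ) ∈ 2πℤ} g(λ) → Σ_{λ : f(λ) ∈ 2πℤ} g(λ) as L → ∞ (all sums being finite). -/
open Filter Real

private lemma two_pi_pos' : (0:ℝ) < 2 * π := by positivity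

private lemma cast_eq_of_two_pi {m n : ℤ} (h : 2 * π * (m:ℝ) = 2 * π * n) : m = n := by
  have := mul_left_cancel₀ (ne_of_gt two_pi_pos') h
  exact_mod_cast this

/-- Finiteness of level sets on compacts. -/
private lemma finite_level (F : ℝ → ℝ) (hF : StrictMono F) (K : Set ℝ) (hK : IsCompact K) :
    ({l : ℝ | ∃ n : ℤ, F l = 2 * π * n} ∩ K).Finite := by
  classical
  obtain ⟨M, hM⟩ := (Metric.isBounded_iff_subset_closedBall 0).mp hK.isBounded
  have hMIcc : K ⊆ Set.Icc (-M) M := by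
    intro x hx
    have := hM hx
    rw [Metric.mem_closedBall, Real.dist_eq, sub_zero] at this
    exact abs_le.mp this
  set φ : ℝ → ℤ := fun l => if h : ∃ n : ℤ, F l = 2 * π * n then h.choose else 0 with hφ
  have hspec : ∀ l ∈ {l : ℝ | ∃ n : ℤ, F l = 2 * π * n}, F l = 2 * π * φ l := by
    intro l hl
    have h : φ l = hl.choose := dif_pos hl
    rw [h]
    exact hl.choose_spec
  apply Set.Finite.of_finite_image (f := φ)
  · apply (Set.finite_Icc (⌈F (-M) / (2*π)⌉) (⌊F M / (2*π)⌋)).subset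
    rintro n ⟨l, ⟨hl, hlK⟩, rfl⟩
    have hFl := hspec l hl
    obtain ⟨h1, h2⟩ := hMIcc hlK
    have e1 : F (-M) ≤ 2 * π * φ l := hFl ▸ hF.monotone h1
    have e2 : 2 * π * φ l ≤ F M := hFl ▸ hF.monotone h2
    constructor
    · rw [Int.ceil_le, div_le_iff₀ two_pi_pos']
      linarith
    · rw [Int.le_floor, le_div_iff₀ two_pi_pos']
      linarith
  · rintro l ⟨hl, -⟩ l' ⟨hl', -⟩ h
    have h1 := hspec l hl
    have h2 := hspec l' hl'
    rw [h] at h1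
    exact hF.injective (h1.trans h2.symm)

open Classical in
/-- The level-set sum rewritten as a sum over integers. -/
private noncomputable def Hf (g F : ℝ → ℝ) (n : ℤ) : ℝ :=
  if h : ∃ l : ℝ, F l = 2 * π * n then g h.choose else 0

private lemma tsum_level (g F : ℝ → ℝ) (hF : Function.Injective F) :
    (∑' l : {l : ℝ // ∃ n : ℤ, F l = 2 * π * n}, g l) = ∑' n : ℤ, Hf g F n := by
  classical
  set e : {l : ℝ // ∃ n : ℤ, F l = 2 * π * n} → ℤ := fun l => l.2.choose with he
  have hespec : ∀ l : {l : ℝ // ∃ n : ℤ, F l = 2 * π * n}, F l = 2 * π * e l :=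
    fun l => l.2.choose_spec
  have heinj : Function.Injective e := by
    intro l l' h
    have : F l.val = F l'.val := by rw [hespec l, hespec l', h]
    exact Subtype.ext (hF this)
  have hsupp : Function.support (Hf g F) ⊆ Set.range e := by
    intro n hn
    have hex : ∃ l : ℝ, F l = 2 * π * n := by
      by_contra hne
      exact hn (by simp [Hf, dif_neg hne])
    refine ⟨⟨hex.choose, ⟨n, hex.choose_spec⟩⟩, ?_⟩
    have := hespec ⟨hex.choose, ⟨n, hex.choose_spec⟩⟩
    exact cast_eq_of_two_pi (this.symm.trans hex.choose_spec)
  have hcomp : ∀ l : {l : ℝ // ∃ n : ℤ, F l = 2 * π * n}, Hf g F (e l) = g l := by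
    intro l
    have hex : ∃ l' : ℝ, F l' = 2 * π * (e l) := ⟨l.val, hespec l⟩
    have : hex.choose = l.val := hF (hex.choose_spec.trans (hespec l).symm)
    simp [Hf, dif_pos hex, this]
  rw [← heinj.tsum_eq hsupp]
  exact tsum_congr (fun l => (hcomp l).symm)

private lemma Hf_tendsto (fL : ℕ → ℝ → ℝ) (f g : ℝ → ℝ)
    (hfLc : ∀ L, Continuous (fL L)) (hfc : Continuous f)
    (hfLm : ∀ L, StrictMono (fL L)) (hfm : StrictMono f)
    (hconv : ∀ K : Set ℝ, IsCompact K → TendstoUniformlyOn fL f atTop K)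
    (hgc : Continuous g) (R : ℝ) (hgR : ∀ x, x ∉ Set.Icc (-R) R → g x = 0) (n : ℤ) :
    Tendsto (fun L => Hf g (fL L) n) atTop (nhds (Hf g f n)) := by
  classical
  set c : ℝ := 2 * π * n with hc
  by_cases h : ∃ l : ℝ, f l = c
  · -- the level is attained by `f`
    set l0 : ℝ := h.choose with hl0
    have hfl0 : f l0 = c := h.choose_spec
    have hHf : Hf g f n = g l0 := dif_pos h
    rw [hHf, Metric.tendsto_nhds]
    intro δ hδ
    obtain ⟨ε, hε, hgε⟩ := Metric.continuous_iff.mp hgc l0 δ hδ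
    have h1 : f (l0 - ε) < c := by rw [← hfl0]; exact hfm (by linarith)
    have h2 : c < f (l0 + ε) := by rw [← hfl0]; exact hfm (by linarith)
    set μ : ℝ := min (f (l0 + ε) - c) (c - f (l0 - ε)) with hμdef
    have hμ : 0 < μ := lt_min (by linarith) (by linarith)
    have huni := Metric.tendstoUniformlyOn_iff.mp
      (hconv (Set.Icc (l0 - ε) (l0 + ε)) isCompact_Icc) μ hμ
    filter_upwards [huni] with L hL
    have hab : l0 - ε ≤ l0 + ε := by linarith
    have hd1 : dist (f (l0 - ε)) (fL L (l0 - ε)) < μ :=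
      hL _ ⟨le_refl _, hab⟩
    have hd2 : dist (f (l0 + ε)) (fL L (l0 + ε)) < μ :=
      hL _ ⟨hab, le_refl _⟩
    rw [Real.dist_eq, abs_lt] at hd1 hd2
    have hμ1 : μ ≤ f (l0 + ε) - c := min_le_left _ _
    have hμ2 : μ ≤ c - f (l0 - ε) := min_le_right _ _
    have hlt1 : fL L (l0 - ε) < c := by linarith
    have hlt2 : c < fL L (l0 + ε) := by linarith
    obtain ⟨x0, hx0, hfx0⟩ :=
      intermediate_value_Icc hab (hfLc L).continuousOn ⟨hlt1.le, hlt2.le⟩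
    have hex : ∃ l : ℝ, fL L l = c := ⟨x0, hfx0⟩
    have hHfL : Hf g (fL L) n = g hex.choose := dif_pos hex
    rw [hHfL]
    apply hgε
    set y : ℝ := hex.choose with hy
    have hfy : fL L y = c := hex.choose_spec
    have hy1 : l0 - ε < y := by
      by_contra hcon
      push_neg at hcon
      have := (hfLm L).monotone hcon
      rw [hfy] at this
      linarith
    have hy2 : y < l0 + ε := by
      by_contra hcon
      push_neg at hcon
      have := (hfLm L).monotone hcon
      rw [hfy] at this
      linarith
    rw [Real.dist_eq, abs_lt]
    constructor <;> linarith
  · -- the level is not attained by `f`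
    have hHf : Hf g f n = 0 := dif_neg h
    rw [hHf]
    have hdi : (∀ x, f x < c) ∨ (∀ x, c < f x) := by
      by_contra hcon
      push_neg at hcon
      obtain ⟨⟨x1, hx1⟩, ⟨x2, hx2⟩⟩ := hcon
      have hcm : c ∈ Set.uIcc (f x2) (f x1) := Set.mem_uIcc.mpr (Or.inl ⟨hx2, hx1⟩)
      obtain ⟨l, _, hl⟩ := intermediate_value_uIcc hfc.continuousOn hcm
      exact h ⟨l, hl⟩
    have hev : ∀ᶠ L in atTop, Hf g (fL L) n = 0 := by
      rcases hdi with hdi | hdi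
      · have hμ : 0 < c - f R := by have := hdi R; linarith
        have huni := Metric.tendstoUniformlyOn_iff.mp
          (hconv (Set.Icc (-R) R) isCompact_Icc) _ hμ
        filter_upwards [huni] with L hL
        by_cases hex : ∃ l : ℝ, fL L l = c
        · have hr : Hf g (fL L) n = g hex.choose := dif_pos hex
          rw [hr]
          apply hgR
          intro hyIcc
          have hfy : fL L hex.choose = c := hex.choose_spec
          have hd := hL _ hyIcc
          rw [hfy, Real.dist_eq, abs_lt] at hd
          have := hfm.monotone hyIcc.2
          linarith
        · exact dif_neg hex
      · have hμ : 0 < f (-R) - c := by have := hdi (-R); linarith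
        have huni := Metric.tendstoUniformlyOn_iff.mp
          (hconv (Set.Icc (-R) R) isCompact_Icc) _ hμ
        filter_upwards [huni] with L hL
        by_cases hex : ∃ l : ℝ, fL L l = c
        · have hr : Hf g (fL L) n = g hex.choose := dif_pos hex
          rw [hr]
          apply hgR
          intro hyIcc
          have hfy : fL L hex.choose = c := hex.choose_spec
          have hd := hL _ hyIcc
          rw [hfy, Real.dist_eq, abs_lt] at hd
          have := hfm.monotone hyIcc.1
          linarith
        · exact dif_neg hex
    exact Tendsto.congr' (hev.mono fun L hL => hL.symm) tendsto_const_nhds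

/-- convergence of level-set counting measures for increasing functions:
if `f_L` and `f` are continuous strictly increasing functions `ℝ → ℝ` with `f_L → f`
uniformly on every compact set, then the level sets `{λ : f_L(λ) ∈ 2πℤ}` and
`{λ : f(λ) ∈ 2πℤ}` are locally finite, and for every continuous non-negative compactly
supported `g`, `Σ_{λ : f_L(λ) ∈ 2πℤ} g(λ) → Σ_{λ : f(λ) ∈ 2πℤ} g(λ)` as `L → ∞`. -/
theorem level_set_counting_convergence (fL : ℕ → ℝ → ℝ) (f : ℝ → ℝ)
    (hfLc : ∀ L, Continuous (fL L)) (hfc : Continuous f)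
    (hfLm : ∀ L, StrictMono (fL L)) (hfm : StrictMono f)
    (hconv : ∀ K : Set ℝ, IsCompact K → TendstoUniformlyOn fL f atTop K) :
    (∀ L, ∀ K : Set ℝ, IsCompact K →
      ({l : ℝ | ∃ n : ℤ, fL L l = 2 * π * n} ∩ K).Finite) ∧
    (∀ K : Set ℝ, IsCompact K →
      ({l : ℝ | ∃ n : ℤ, f l = 2 * π * n} ∩ K).Finite) ∧
    (∀ g : ℝ → ℝ, Continuous g → (∀ y, 0 ≤ g y) → HasCompactSupport g →
      Tendsto
        (fun L : ℕ => ∑' l : {l : ℝ // ∃ n : ℤ, fL L l = 2 * π * n}, g l)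
        atTop
        (nhds (∑' l : {l : ℝ // ∃ n : ℤ, f l = 2 * π * n}, g l))) := by
  classical
  refine ⟨fun L K hK => finite_level _ (hfLm L) K hK,
    fun K hK => finite_level _ hfm K hK, ?_⟩
  intro g hgc hgnn hgsupp
  -- obtain a radius containing the support of `g`
  obtain ⟨R, hR⟩ := (Metric.isBounded_iff_subset_closedBall 0).mp hgsupp.isBounded
  have hgR : ∀ x, x ∉ Set.Icc (-R) R → g x = 0 := by
    intro x hx
    apply image_eq_zero_of_notMem_tsupport
    intro hmem
    have := hR hmem
    rw [Metric.mem_closedBall, Real.dist_eq, sub_zero] at this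
    exact hx (abs_le.mp this)
  set N : Finset ℤ := Finset.Icc ⌈(f (-R) - 1) / (2 * π)⌉ ⌊(f R + 1) / (2 * π)⌋ with hN
  have hNmem : ∀ n : ℤ, f (-R) - 1 ≤ 2 * π * n → 2 * π * n ≤ f R + 1 → n ∈ N := by
    intro n h1 h2
    rw [hN, Finset.mem_Icc]
    constructor
    · rw [Int.ceil_le, div_le_iff₀ two_pi_pos']
      linarith
    · rw [Int.le_floor, le_div_iff₀ two_pi_pos']
      linarith
  have hfN : ∀ n ∉ N, Hf g f n = 0 := by
    intro n hn
    by_cases hex : ∃ l : ℝ, f l = 2 * π * n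
    · have hr : Hf g f n = g hex.choose := dif_pos hex
      rw [hr]
      by_contra h0
      have hyIcc : hex.choose ∈ Set.Icc (-R) R := by
        by_contra hy
        exact h0 (hgR _ hy)
      have hfy : f hex.choose = 2 * π * n := hex.choose_spec
      have e1 := hfm.monotone hyIcc.1
      have e2 := hfm.monotone hyIcc.2
      rw [hfy] at e1 e2
      exact hn (hNmem n (by linarith) (by linarith))
    · exact dif_neg hex
  rw [show (∑' l : {l : ℝ // ∃ n : ℤ, f l = 2 * π * n}, g l) = ∑ n ∈ N, Hf g f n from
    (tsum_level g f hfm.injective).trans (tsum_eq_sum hfN)]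
  have key : ∀ᶠ L in atTop,
      (∑' l : {l : ℝ // ∃ n : ℤ, fL L l = 2 * π * n}, g l) = ∑ n ∈ N, Hf g (fL L) n := by
    have huni := Metric.tendstoUniformlyOn_iff.mp
      (hconv (Set.Icc (-R) R) isCompact_Icc) 1 one_pos
    filter_upwards [huni] with L hL
    rw [tsum_level g (fL L) (hfLm L).injective]
    apply tsum_eq_sum
    intro n hn
    by_cases hex : ∃ l : ℝ, fL L l = 2 * π * n
    · have hr : Hf g (fL L) n = g hex.choose := dif_pos hex
      rw [hr]
      by_contra h0
      have hyIcc : hex.choose ∈ Set.Icc (-R) R := by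
        by_contra hy
        exact h0 (hgR _ hy)
      have hfy : fL L hex.choose = 2 * π * n := hex.choose_spec
      have hd := hL _ hyIcc
      rw [hfy, Real.dist_eq, abs_lt] at hd
      have e1 := hfm.monotone hyIcc.1
      have e2 := hfm.monotone hyIcc.2
      exact hn (hNmem n (by linarith) (by linarith))
    · exact dif_neg hex
  refine Tendsto.congr' (key.mono fun L hL => hL.symm) ?_
  exact tendsto_finset_sum N fun n _ =>
    Hf_tendsto fL f g hfLc hfc hfLm hfm hconv hgc R hgR n
end

section
/- Let ρ : ℝ → ℝ be continuous with ρ(E) > 0 for every E, and let E₀ ∈ ℝ. For each integer L ≥ 1 define recursively E₀^L = E₀ and E^L_{j+1} = E^L_j + 2π/(ρ(E^L_j) L), and for ε > 0 let M_L(ε) = min{ m ≥ 0 : E^L_m ≥ E₀ + ε } (which is finite). Then lim_{ε→0⁺} limsup_{L→∞} M_L(ε)/(εL) = ρ(E₀)/(2π) and lim_{ε→0⁺} liminf_{L→∞} M_L(ε)/(εL) = ρ(E₀)/(2π). -/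
open Filter Real

noncomputable section

/-- The recursively defined energy grid: `E₀^L = E₀` and
`E^L_{j+1} = E^L_j + 2π/(ρ(E^L_j) L)`. -/
def energyGrid (ρ : ℝ → ℝ) (E₀ : ℝ) (L : ℕ) : ℕ → ℝ
  | 0 => E₀
  | j + 1 => energyGrid ρ E₀ L j + 2 * π / (ρ (energyGrid ρ E₀ L j) * L)

/-- `M_L(ε) = min { m ≥ 0 : E^L_m ≥ E₀ + ε }`. -/
def gridCount (ρ : ℝ → ℝ) (E₀ : ℝ) (L : ℕ) (ε : ℝ) : ℕ :=
  sInf {m : ℕ | E₀ + ε ≤ energyGrid ρ E₀ L m}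

namespace EGDaux

/-- Two-sided growth bounds for the grid while it stays below `E₀ + ε`. -/
lemma grid_bounds (ρ : ℝ → ℝ) (E₀ : ℝ) {ε : ℝ} (hε : 0 < ε) {L : ℕ} (hL : 1 ≤ L)
    {a b : ℝ} (ha : 0 < a) (hb : 0 < b)
    (hmin : ∀ y ∈ Set.Icc E₀ (E₀ + ε), a ≤ ρ y)
    (hmax : ∀ y ∈ Set.Icc E₀ (E₀ + ε), ρ y ≤ b)
    (m : ℕ) (hm : ∀ j < m, energyGrid ρ E₀ L j < E₀ + ε) :
    E₀ + m * (2 * π / (b * L)) ≤ energyGrid ρ E₀ L m ∧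
      energyGrid ρ E₀ L m ≤ E₀ + m * (2 * π / (a * L)) := by
  have hLpos : (0 : ℝ) < L := by exact_mod_cast hL
  induction m with
  | zero => simp [energyGrid]
  | succ n ih =>
    have hn : ∀ j < n, energyGrid ρ E₀ L j < E₀ + ε :=
      fun j hj => hm j (hj.trans (Nat.lt_succ_self n))
    obtain ⟨h1, h2⟩ := ih hn
    have hEn_lt : energyGrid ρ E₀ L n < E₀ + ε := hm n (Nat.lt_succ_self n)
    have hnn : (0 : ℝ) ≤ (n : ℝ) * (2 * π / (b * L)) := by positivity
    have hEn_ge : E₀ ≤ energyGrid ρ E₀ L n := by linarith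
    have hmem : energyGrid ρ E₀ L n ∈ Set.Icc E₀ (E₀ + ε) := ⟨hEn_ge, hEn_lt.le⟩
    have hra : a ≤ ρ (energyGrid ρ E₀ L n) := hmin _ hmem
    have hrb : ρ (energyGrid ρ E₀ L n) ≤ b := hmax _ hmem
    have hrpos : 0 < ρ (energyGrid ρ E₀ L n) := lt_of_lt_of_le ha hra
    have hero : energyGrid ρ E₀ L (n + 1)
        = energyGrid ρ E₀ L n + 2 * π / (ρ (energyGrid ρ E₀ L n) * L) := rfl
    have hstep_lb : 2 * π / (b * L) ≤ 2 * π / (ρ (energyGrid ρ E₀ L n) * L) := by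
      gcongr <;> first | positivity | linarith [Real.pi_pos]
    have hstep_ub : 2 * π / (ρ (energyGrid ρ E₀ L n) * L) ≤ 2 * π / (a * L) := by
      gcongr <;> first | positivity | linarith [Real.pi_pos]
    constructor
    · rw [hero]; push_cast; nlinarith
    · rw [hero]; push_cast; nlinarith

/-- The defining set of `gridCount` is nonempty. -/
lemma nonempty_set (ρ : ℝ → ℝ) (E₀ : ℝ) {ε : ℝ} (hε : 0 < ε) {L : ℕ} (hL : 1 ≤ L)
    {a b : ℝ} (ha : 0 < a) (hb : 0 < b)
    (hmin : ∀ y ∈ Set.Icc E₀ (E₀ + ε), a ≤ ρ y)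
    (hmax : ∀ y ∈ Set.Icc E₀ (E₀ + ε), ρ y ≤ b) :
    {m : ℕ | E₀ + ε ≤ energyGrid ρ E₀ L m}.Nonempty := by
  have hLpos : (0 : ℝ) < L := by exact_mod_cast hL
  by_contra hne
  rw [Set.not_nonempty_iff_eq_empty] at hne
  have hall : ∀ m, energyGrid ρ E₀ L m < E₀ + ε := by
    intro m
    by_contra hc
    push_neg at hc
    have : m ∈ {m : ℕ | E₀ + ε ≤ energyGrid ρ E₀ L m} := hc
    rw [hne] at this
    exact this
  have hstep : (0 : ℝ) < 2 * π / (b * L) := by positivity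
  obtain ⟨m, hm⟩ := exists_nat_gt (ε / (2 * π / (b * L)))
  have hlb := (grid_bounds ρ E₀ hε hL ha hb hmin hmax m (fun j _ => hall j)).1
  have := hall m
  have hmε : ε / (2 * π / (b * L)) * (2 * π / (b * L)) < m * (2 * π / (b * L)) := by
    exact mul_lt_mul_of_pos_right hm hstep
  rw [div_mul_cancel₀ _ (ne_of_gt hstep)] at hmε
  linarith

/-- Two-sided bounds on the counting number. -/
lemma gridCount_bounds (ρ : ℝ → ℝ) (E₀ : ℝ) {ε : ℝ} (hε : 0 < ε) {L : ℕ} (hL : 1 ≤ L)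
    {a b : ℝ} (ha : 0 < a) (hb : 0 < b)
    (hmin : ∀ y ∈ Set.Icc E₀ (E₀ + ε), a ≤ ρ y)
    (hmax : ∀ y ∈ Set.Icc E₀ (E₀ + ε), ρ y ≤ b) :
    ε * a * L / (2 * π) ≤ (gridCount ρ E₀ L ε : ℝ) ∧
      (gridCount ρ E₀ L ε : ℝ) ≤ ε * b * L / (2 * π) + 1 := by
  have hLpos : (0 : ℝ) < L := by exact_mod_cast hL
  set M := gridCount ρ E₀ L ε with hMdef
  have hne := nonempty_set ρ E₀ hε hL ha hb hmin hmax
  have hM_mem : E₀ + ε ≤ energyGrid ρ E₀ L M := Nat.sInf_mem hne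
  have hM_lt : ∀ j < M, energyGrid ρ E₀ L j < E₀ + ε := by
    intro j hj
    by_contra hc
    push_neg at hc
    exact Nat.notMem_of_lt_sInf hj hc
  have hM1 : 1 ≤ M := by
    by_contra hc
    push_neg at hc
    interval_cases M
    · simp only [energyGrid] at hM_mem; linarith
  -- lower bound
  have h2 := (grid_bounds ρ E₀ hε hL ha hb hmin hmax M hM_lt).2
  have hεle : ε ≤ (M : ℝ) * (2 * π / (a * L)) := by linarith
  have hlow : ε * a * L / (2 * π) ≤ (M : ℝ) := by
    rw [div_le_iff₀ (by positivity)]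
    have := mul_le_mul_of_nonneg_right hεle (le_of_lt (mul_pos ha hLpos))
    rw [mul_assoc, div_mul_cancel₀ _ (by positivity : (a * (L:ℝ)) ≠ 0)] at this
    nlinarith
  -- upper bound
  have hlt : ∀ j < M - 1, energyGrid ρ E₀ L j < E₀ + ε :=
    fun j hj => hM_lt j (lt_of_lt_of_le hj (Nat.sub_le _ _))
  have h1 := (grid_bounds ρ E₀ hε hL ha hb hmin hmax (M - 1) hlt).1
  have hEm1 : energyGrid ρ E₀ L (M - 1) < E₀ + ε :=
    hM_lt (M - 1) (Nat.sub_lt (by omega) one_pos)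
  have hcast : ((M - 1 : ℕ) : ℝ) = (M : ℝ) - 1 := by
    push_cast [hM1]; ring
  have hkey : ((M : ℝ) - 1) * (2 * π / (b * L)) < ε := by
    rw [← hcast]; linarith
  have hhigh : (M : ℝ) ≤ ε * b * L / (2 * π) + 1 := by
    have hstep : (0 : ℝ) < 2 * π / (b * L) := by positivity
    have := (lt_div_iff₀ hstep).mpr hkey
    rw [div_div_eq_mul_div] at this
    have heq : ε * ((b : ℝ) * L) / (2 * π) = ε * b * L / (2 * π) := by ring_nf
    rw [heq] at this
    linarith
  exact ⟨hlow, hhigh⟩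

end EGDaux

/-- for continuous everywhere-positive `ρ` and any `E₀`, the counting
numbers `M_L(ε)` are well defined (the defining set is nonempty for `L ≥ 1`), and
`lim_{ε→0⁺} limsup_{L→∞} M_L(ε)/(εL) = ρ(E₀)/(2π)` as well as
`lim_{ε→0⁺} liminf_{L→∞} M_L(ε)/(εL) = ρ(E₀)/(2π)`. -/
theorem energy_grid_density (ρ : ℝ → ℝ) (hρc : Continuous ρ) (hρ : ∀ E, 0 < ρ E)
    (E₀ : ℝ) :
    (∀ L : ℕ, 1 ≤ L → ∀ ε : ℝ, 0 < ε →
      {m : ℕ | E₀ + ε ≤ energyGrid ρ E₀ L m}.Nonempty) ∧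
    Tendsto
      (fun ε : ℝ => limsup
        (fun L : ℕ => (gridCount ρ E₀ L ε : ℝ) / (ε * L)) atTop)
      (nhdsWithin 0 (Set.Ioi 0)) (nhds (ρ E₀ / (2 * π))) ∧
    Tendsto
      (fun ε : ℝ => liminf
        (fun L : ℕ => (gridCount ρ E₀ L ε : ℝ) / (ε * L)) atTop)
      (nhdsWithin 0 (Set.Ioi 0)) (nhds (ρ E₀ / (2 * π))) := by
  have hπ : (0 : ℝ) < π := Real.pi_pos
  -- extremizers on [E₀, E₀+ε]
  have extrem : ∀ ε : ℝ, 0 < ε → ∃ xa ∈ Set.Icc E₀ (E₀ + ε), ∃ xb ∈ Set.Icc E₀ (E₀ + ε),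
      (∀ y ∈ Set.Icc E₀ (E₀ + ε), ρ xa ≤ ρ y) ∧
      (∀ y ∈ Set.Icc E₀ (E₀ + ε), ρ y ≤ ρ xb) := by
    intro ε hε
    have hK : IsCompact (Set.Icc E₀ (E₀ + ε)) := isCompact_Icc
    have hKne : (Set.Icc E₀ (E₀ + ε)).Nonempty := ⟨E₀, by constructor <;> linarith⟩
    obtain ⟨xa, hxa, hxa'⟩ := hK.exists_isMinOn hKne hρc.continuousOn
    obtain ⟨xb, hxb, hxb'⟩ := hK.exists_isMaxOn hKne hρc.continuousOn
    exact ⟨xa, hxa, xb, hxb, fun y hy => hxa' hy, fun y hy => hxb' hy⟩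
  -- main per-ε sandwich for limsup and liminf
  have key : ∀ ε : ℝ, 0 < ε → ∃ xa ∈ Set.Icc E₀ (E₀ + ε), ∃ xb ∈ Set.Icc E₀ (E₀ + ε),
      ρ xa / (2 * π) ≤ liminf (fun L : ℕ => (gridCount ρ E₀ L ε : ℝ) / (ε * L)) atTop ∧
      limsup (fun L : ℕ => (gridCount ρ E₀ L ε : ℝ) / (ε * L)) atTop ≤ ρ xb / (2 * π) ∧
      liminf (fun L : ℕ => (gridCount ρ E₀ L ε : ℝ) / (ε * L)) atTop ≤
        limsup (fun L : ℕ => (gridCount ρ E₀ L ε : ℝ) / (ε * L)) atTop := by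
    intro ε hε
    obtain ⟨xa, hxa, xb, hxb, hmin, hmax⟩ := extrem ε hε
    set a := ρ xa with ha_def
    set b := ρ xb with hb_def
    have ha : 0 < a := hρ xa
    have hb : 0 < b := hρ xb
    set f : ℕ → ℝ := fun L => (gridCount ρ E₀ L ε : ℝ) / (ε * L) with hf_def
    have hbnd : ∀ L : ℕ, 1 ≤ L → a / (2 * π) ≤ f L ∧ f L ≤ b / (2 * π) + 1 / (ε * L) := by
      intro L hL
      have hLpos : (0 : ℝ) < L := by exact_mod_cast hL
      obtain ⟨hlo, hhi⟩ := EGDaux.gridCount_bounds ρ E₀ hε hL ha hb hmin hmax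
      constructor
      · rw [hf_def]
        simp only
        rw [le_div_iff₀ (by positivity)]
        have : a / (2 * π) * (ε * L) = ε * a * L / (2 * π) := by ring
        rw [this]; exact hlo
      · rw [hf_def]
        simp only
        rw [div_le_iff₀ (by positivity)]
        have : (b / (2 * π) + 1 / (ε * L)) * (ε * L) = ε * b * L / (2 * π) + 1 := by
          field_simp
        rw [this]; exact hhi
    have hev_lo : ∀ᶠ L : ℕ in atTop, a / (2 * π) ≤ f L := by
      filter_upwards [eventually_ge_atTop 1] with L hL using (hbnd L hL).1
    have hev_hi : ∀ᶠ L : ℕ in atTop, f L ≤ b / (2 * π) + 1 / (ε * L) := by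
      filter_upwards [eventually_ge_atTop 1] with L hL using (hbnd L hL).2
    have hev_hi' : ∀ᶠ L : ℕ in atTop, f L ≤ b / (2 * π) + 1 / ε := by
      filter_upwards [eventually_ge_atTop 1] with L hL
      have hLpos : (0 : ℝ) < L := by exact_mod_cast hL
      have hL1 : (1 : ℝ) ≤ L := by exact_mod_cast hL
      have h1 : 1 / (ε * L) ≤ 1 / ε := by
        rw [div_le_div_iff₀ (by positivity) hε]
        nlinarith
      linarith [(hbnd L hL).2]
    have hbdd_above : IsBoundedUnder (· ≤ ·) atTop f :=
      isBoundedUnder_of_eventually_le hev_hi'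
    have hbdd_below : IsBoundedUnder (· ≥ ·) atTop f :=
      isBoundedUnder_of_eventually_ge hev_lo
    have htend : Tendsto (fun L : ℕ => b / (2 * π) + 1 / (ε * L)) atTop
        (nhds (b / (2 * π))) := by
      have h0 : Tendsto (fun L : ℕ => 1 / (ε * L)) atTop (nhds 0) := by
        simp only [one_div]
        apply Tendsto.inv_tendsto_atTop
        exact Tendsto.const_mul_atTop hε tendsto_natCast_atTop_atTop
      have h1 := (tendsto_const_nhds (x := b / (2 * π)) (f := atTop (α := ℕ))).add h0
      simpa using h1
    have hlimsup_le : limsup f atTop ≤ b / (2 * π) := by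
      have h1 : limsup f atTop ≤ limsup (fun L : ℕ => b / (2 * π) + 1 / (ε * L)) atTop :=
        limsup_le_limsup hev_hi (hbdd_below.isCoboundedUnder_le)
          (htend.isBoundedUnder_le)
      rwa [htend.limsup_eq] at h1
    have hliminf_ge : a / (2 * π) ≤ liminf f atTop :=
      le_liminf_of_le (hbdd_above.isCoboundedUnder_ge) hev_lo
    exact ⟨xa, hxa, xb, hxb, hliminf_ge, hlimsup_le,
      liminf_le_limsup hbdd_above hbdd_below⟩
  -- the sandwich gives both limits by continuity of ρ at E₀
  have main : ∀ g : ℝ → ℝ,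
      (∀ ε : ℝ, 0 < ε → ∃ xa ∈ Set.Icc E₀ (E₀ + ε), ∃ xb ∈ Set.Icc E₀ (E₀ + ε),
        ρ xa / (2 * π) ≤ g ε ∧ g ε ≤ ρ xb / (2 * π)) →
      Tendsto g (nhdsWithin 0 (Set.Ioi 0)) (nhds (ρ E₀ / (2 * π))) := by
    intro g hg
    rw [Metric.tendsto_nhdsWithin_nhds]
    intro δ hδ
    have hδπ : 0 < δ * π := by positivity
    obtain ⟨η, hη, hcont⟩ := Metric.continuous_iff.mp hρc E₀ (δ * π) hδπ
    refine ⟨η / 2, by positivity, ?_⟩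
    intro ε hεIoi hεd
    have hε : 0 < ε := hεIoi
    have hεη : ε < η := by
      rw [Real.dist_eq, sub_zero, abs_of_pos hε] at hεd
      linarith
    obtain ⟨xa, hxa, xb, hxb, h1, h2⟩ := hg ε hε
    have hda : dist xa E₀ < η := by
      rw [Real.dist_eq, abs_lt]
      constructor <;> [linarith [hxa.1]; linarith [hxa.2]]
    have hdb : dist xb E₀ < η := by
      rw [Real.dist_eq, abs_lt]
      constructor <;> [linarith [hxb.1]; linarith [hxb.2]]
    have hca := hcont xa hda
    have hcb := hcont xb hdb
    rw [Real.dist_eq, abs_lt] at hca hcb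
    have hconv : δ * π / (2 * π) = δ / 2 := by
      field_simp
    have hga : ρ E₀ / (2 * π) - δ / 2 < g ε := by
      have : (ρ E₀ - δ * π) / (2 * π) < ρ xa / (2 * π) := by
        gcongr <;> linarith
      have heq : (ρ E₀ - δ * π) / (2 * π) = ρ E₀ / (2 * π) - δ / 2 := by
        field_simp
      linarith [h1, heq ▸ this]
    have hgb : g ε < ρ E₀ / (2 * π) + δ / 2 := by
      have : ρ xb / (2 * π) < (ρ E₀ + δ * π) / (2 * π) := by
        gcongr <;> linarith
      have heq : (ρ E₀ + δ * π) / (2 * π) = ρ E₀ / (2 * π) + δ / 2 := by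
        field_simp
      linarith [h2, heq ▸ this]
    rw [Real.dist_eq, abs_lt]
    constructor <;> linarith
  refine ⟨?_, ?_, ?_⟩
  · intro L hL ε hε
    obtain ⟨xa, hxa, xb, hxb, hmin, hmax⟩ := extrem ε hε
    exact EGDaux.nonempty_set ρ E₀ hε hL (hρ xa) (hρ xb) hmin hmax
  · apply main
    intro ε hε
    obtain ⟨xa, hxa, xb, hxb, h1, h2, h3⟩ := key ε hε
    exact ⟨xa, hxa, xb, hxb, le_trans h1 h3, h2⟩
  · apply main
    intro ε hε
    obtain ⟨xa, hxa, xb, hxb, h1, h2, h3⟩ := key ε hε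
    exact ⟨xa, hxa, xb, hxb, h1, le_trans h3 h2⟩
end
end

section
/- Monotonicity of a continuous phase whose tangent is a Herglotz function: let N ≥ 1, let λ₁ < λ₂ < … < λ_N be real numbers, let a₁, …, a_N > 0, let A ∈ ℝ and B > 0. Suppose f : ℝ → ℝ is continuous and satisfies, for every λ ∉ {λ₁, …, λ_N}, cos(f(λ)) ≠ 0 and tan(f(λ)) = A + B Σ_{j=1}^{N} aⱼ/(λⱼ − λ). Then f is strictly increasing on ℝ. -/
/-! Near a point off the poles, continuity of `f` keeps it on a single branch
`arctan ∘ g + m π` of the inverse tangent, where `g λ = A + B Σⱼ aⱼ / (λⱼ - λ)`; hence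
`f' = g' / (1 + g²)` with `g' = B Σⱼ aⱼ / (λⱼ - λ)² > 0`. A continuous function whose derivative
is positive off a finite set is strictly increasing: cut the line at the exceptional points and
glue the strictly monotone pieces. -/

open Real Filter Topology Set

lemma exists_int_eventually_eq_arctan_tan_add {c : ℝ} (hc : cos c ≠ 0) :
    ∃ m : ℤ, ∀ᶠ y in 𝓝 c, y = arctan (tan y) + m * π := by
  obtain ⟨m, hm⟩ : ∃ m : ℤ, c - m * π ∈ Ioo (-(π / 2)) (π / 2) := by
    set r := round (c / π)
    have hround := abs_le.1 (abs_sub_round (c / π))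
    have hscale : c - r * π = (c / π - r) * π := by field_simp
    have hne : ∀ k : ℤ, c ≠ (2 * k + 1) * π / 2 := fun k hk ↦ hc (cos_eq_zero_iff.2 ⟨k, hk⟩)
    refine ⟨r, lt_of_le_of_ne ?_ fun h ↦ hne (r - 1) ?_, lt_of_le_of_ne ?_ fun h ↦ hne r ?_⟩
    · rw [hscale]; nlinarith [pi_pos]
    · push_cast; linarith
    · rw [hscale]; nlinarith [pi_pos]
    · linarith
  refine ⟨m, ?_⟩
  have hnhds : Ioo (-(π / 2) + m * π) (π / 2 + m * π) ∈ 𝓝 c :=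
    Ioo_mem_nhds (by linarith [hm.1]) (by linarith [hm.2])
  filter_upwards [hnhds] with y hy
  rw [← tan_periodic.sub_int_mul_eq m, arctan_tan (by linarith [hy.1]) (by linarith [hy.2])]
  ring

lemma hasDerivAt_of_tan_eventuallyEq {f g : ℝ → ℝ} {g' x : ℝ} (hf : ContinuousAt f x)
    (hcos : cos (f x) ≠ 0) (htan : (fun l ↦ tan (f l)) =ᶠ[𝓝 x] g) (hg : HasDerivAt g g' x) :
    HasDerivAt f (1 / (1 + g x ^ 2) * g') x := by
  obtain ⟨m, hm⟩ := exists_int_eventually_eq_arctan_tan_add hcos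
  have hbranch : f =ᶠ[𝓝 x] fun l ↦ arctan (g l) + m * π := by
    filter_upwards [hf.eventually hm, htan] with l hl hl'
    rwa [← hl']
  exact (((hasDerivAt_arctan (g x)).comp x hg).add_const _).congr_of_eventuallyEq hbranch

lemma hasDerivAt_sum_div_sub {ι : Type*} [Fintype ι] (a p : ι → ℝ) {x : ℝ}
    (hx : ∀ j, x ≠ p j) :
    HasDerivAt (fun l ↦ ∑ j, a j / (p j - l)) (∑ j, a j / (p j - x) ^ 2) x := by
  refine HasDerivAt.fun_sum fun j _ ↦ ?_
  have hj : p j - x ≠ 0 := sub_ne_zero.2 (hx j).symm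
  exact ((hasDerivAt_const x (a j)).fun_div ((hasDerivAt_id' x).const_sub (p j)) hj).congr_deriv
    (by ring)

lemma strictMonoOn_of_deriv_pos_of_finite {D S : Set ℝ} (hD : Convex ℝ D) {f : ℝ → ℝ}
    (hf : ContinuousOn f D) (hS : S.Finite) (hf' : ∀ x ∈ interior D \ S, 0 < deriv f x) :
    StrictMonoOn f D := by
  induction S, hS using Set.Finite.induction_on generalizing D with
  | empty => exact strictMonoOn_of_deriv_pos hD hf fun x hx ↦ hf' x ⟨hx, notMem_empty x⟩
  | @insert s S _ _ ih =>
    by_cases hs : s ∈ interior D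
    · have hsD : s ∈ D := interior_subset hs
      rw [← inter_univ D, ← Iic_union_Ici (a := s), inter_union_distrib_left]
      refine StrictMonoOn.union ?_ ?_ ⟨⟨hsD, mem_Iic.2 le_rfl⟩, fun _ hy ↦ hy.2⟩
        ⟨⟨hsD, mem_Ici.2 le_rfl⟩, fun _ hy ↦ hy.2⟩
      · refine ih (hD.inter (convex_Iic s)) (hf.mono inter_subset_left) fun x hx ↦ hf' x ?_
        rw [interior_inter, interior_Iic] at hx
        exact ⟨hx.1.1, by simp [hx.2, (mem_Iio.1 hx.1.2).ne]⟩
      · refine ih (hD.inter (convex_Ici s)) (hf.mono inter_subset_left) fun x hx ↦ hf' x ?_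
        rw [interior_inter, interior_Ici] at hx
        exact ⟨hx.1.1, by simp [hx.2, (mem_Ioi.1 hx.1.2).ne']⟩
    · exact ih hD hf fun x hx ↦ hf' x ⟨hx.1, by simp [hx.2, ne_of_mem_of_not_mem hx.1 hs]⟩

theorem herglotz_phase_strictMono_general (N : ℕ) (hN : 1 ≤ N)
    (lam : Fin N → ℝ)
    (a : Fin N → ℝ) (ha : ∀ j, 0 < a j) (A B : ℝ) (hB : 0 < B)
    (f : ℝ → ℝ) (hf : Continuous f)
    (h : ∀ l : ℝ, (∀ j, l ≠ lam j) →
      Real.cos (f l) ≠ 0 ∧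
        Real.tan (f l) = A + B * ∑ j, a j / (lam j - l)) :
    StrictMono f := by
  have hpoles : (range lam).Finite := finite_range lam
  refine strictMonoOn_univ.1 <| strictMonoOn_of_deriv_pos_of_finite convex_univ hf.continuousOn
    hpoles fun x hx ↦ ?_
  have off_poles : ∀ {l}, l ∉ range lam → ∀ j, l ≠ lam j := fun hl j hj ↦ hl ⟨j, hj.symm⟩
  have hx' := off_poles hx.2
  have htan : (fun l ↦ tan (f l)) =ᶠ[𝓝 x] fun l ↦ A + B * ∑ j, a j / (lam j - l) := by
    filter_upwards [hpoles.isClosed.isOpen_compl.mem_nhds hx.2] with l hl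
    exact (h l (off_poles hl)).2
  have hg := ((hasDerivAt_sum_div_sub a lam hx').const_mul B).const_add A
  rw [(hasDerivAt_of_tan_eventuallyEq hf.continuousAt (h x hx').1 htan hg).deriv]
  have hsum : 0 < ∑ j, a j / (lam j - x) ^ 2 :=
    Finset.sum_pos (fun j _ ↦ div_pos (ha j) (sq_pos_of_ne_zero (sub_ne_zero.2 (hx' j).symm)))
      ⟨⟨0, hN⟩, Finset.mem_univ _⟩
  positivity

/-- monotonicity of a continuous phase whose tangent is a Herglotz
function: let `λ₁ < ⋯ < λ_N` be real, `a₁, …, a_N > 0`, `A ∈ ℝ`, `B > 0`. If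
`f : ℝ → ℝ` is continuous and for every `λ ∉ {λ₁, …, λ_N}` one has `cos(f(λ)) ≠ 0` and
`tan(f(λ)) = A + B Σⱼ aⱼ/(λⱼ − λ)`, then `f` is strictly increasing on `ℝ`. -/
theorem herglotz_phase_strictMono (N : ℕ) (hN : 1 ≤ N)
    (lam : Fin N → ℝ) (hlam : StrictMono lam)
    (a : Fin N → ℝ) (ha : ∀ j, 0 < a j) (A B : ℝ) (hB : 0 < B)
    (f : ℝ → ℝ) (hf : Continuous f)
    (h : ∀ l : ℝ, (∀ j, l ≠ lam j) →
      Real.cos (f l) ≠ 0 ∧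
        Real.tan (f l) = A + B * ∑ j, a j / (lam j - l)) :
    StrictMono f :=
  herglotz_phase_strictMono_general N hN lam a ha A B hB f hf h
end
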